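/- Let D > 0, let N be a positive integer, and set x_j = −1 + (2j−1)/N for j = 1,…,N. With G(x,z) = |x−z|/(2D) − (1/(2D))(1/3 + x²/2 + z²/2), for every k ∈ {1,…,N} one has Σ_{j=1}^{N} G(x_k, x_j) = −1/(6DN). -/

import Mathlib

/-!
Put `N x_j = 2j + 1 - N`. Then `|x_k - x_j| = 2|k - j|/N`, and the two elementary sums
`∑_j |k - j| = ((2k + 1 - N)² + N² - 1)/4` and `∑_j (2j + 1 - N)² = N(N² - 1)/3` turn the row sum
of `G` into an explicit rational function of `N` and `k`, in which the `k`-dependence cancels: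
the term `N x_k²/2` of the quadratic part exactly absorbs the `(2k + 1 - N)²` of the
absolute-value part.
-/

open Real

/-- The Neumann Green's function with zero average for `D d²/dx² + 1/2` on `(−1,1)`. -/
noncomputable def G (D x z : ℝ) : ℝ :=
  |x - z| / (2 * D) - (1 / (2 * D)) * (1/3 + x^2/2 + z^2/2)

open Finset

theorem sum_G_eq {ι : Type*} (D a : ℝ) (s : Finset ι) (b : ι → ℝ) :
    ∑ j ∈ s, G D a (b j) =
      (∑ j ∈ s, |a - b j| - #s * (1/3 + a^2/2) - (∑ j ∈ s, b j ^ 2) / 2) / (2 * D) := by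
  simp only [G, sum_sub_distrib, ← sum_div, ← mul_sum, sum_add_distrib, sum_const, nsmul_eq_mul]
  ring

theorem sum_range_sub_cast (k n : ℕ) :
    ∑ j ∈ range n, ((k : ℝ) - j) = n * k - n * (n - 1) / 2 := by
  induction n with
  | zero => simp
  | succ n ih => rw [sum_range_succ, ih]; push_cast; ring

theorem sum_range_abs_sub_cast {k n : ℕ} (hk : k < n) :
    ∑ j ∈ range n, |(k : ℝ) - j| = ((2 * k + 1 - n) ^ 2 + n ^ 2 - 1) / 4 := by
  induction n, hk using Nat.le_induction with
  | base =>
    have hle : ∀ j ∈ range (k + 1), |(k : ℝ) - j| = k - j := fun j hj =>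
      abs_of_nonneg (sub_nonneg.2 (by exact_mod_cast Nat.lt_succ_iff.1 (mem_range.1 hj)))
    rw [sum_congr rfl hle, sum_range_sub_cast]
    push_cast
    ring
  | succ n hkn ih =>
    rw [sum_range_succ, ih, abs_sub_comm, abs_of_nonneg (sub_nonneg.2 (by exact_mod_cast Nat.le_of_succ_le hkn))]
    push_cast
    ring

theorem sum_range_sq_two_mul_add_one_sub (n : ℕ) (c : ℝ) :
    ∑ j ∈ range n, (2 * (j : ℝ) + 1 - c) ^ 2 = n * (n ^ 2 - 1) / 3 + n * (n - c) ^ 2 := by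
  induction n with
  | zero => simp
  | succ n ih => rw [sum_range_succ, ih]; push_cast; ring

theorem stmt_9_general (D : ℝ) (N : ℕ)
    (x : Fin N → ℝ) (hx : ∀ j : Fin N, x j = -1 + (2 * (j : ℝ) + 1) / N) :
    ∀ k : Fin N, (∑ j : Fin N, G D (x k) (x j)) = -1 / (6 * D * N) := by
  intro k
  have hN : (N : ℝ) ≠ 0 := Nat.cast_ne_zero.2 k.pos.ne'
  have hx' : ∀ j : Fin N, x j = (2 * (j : ℝ) + 1 - N) / N := fun j => by
    rw [hx]; field_simp; ring
  have habs : ∑ j, |x k - x j| = ((2 * k + 1 - N) ^ 2 + N ^ 2 - 1) / (2 * N) := by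
    have hdist : ∀ j : Fin N, |x k - x j| = 2 / N * |(k : ℝ) - j| := fun j => by
      have hsub : x k - x j = 2 / N * (k - j) := by rw [hx', hx']; field_simp; ring
      rw [hsub, abs_mul, abs_of_nonneg (by positivity)]
    simp only [hdist, ← mul_sum]
    rw [Fin.sum_univ_eq_sum_range (fun j => |(k : ℝ) - j|), sum_range_abs_sub_cast k.isLt]
    field_simp
    ring
  have hsq : ∑ j, x j ^ 2 = (N ^ 2 - 1) / (3 * N) := by
    simp only [hx', div_pow, ← sum_div]
    rw [Fin.sum_univ_eq_sum_range (fun j => (2 * (j : ℝ) + 1 - N) ^ 2),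
      sum_range_sq_two_mul_add_one_sub]
    field_simp
    ring
  have hrow : ∑ j, |x k - x j| - #(univ : Finset (Fin N)) * (1/3 + x k ^ 2 / 2)
      - (∑ j, x j ^ 2) / 2 = -1 / (3 * N) := by
    rw [habs, hsq, card_univ, Fintype.card_fin, hx' k]
    field_simp
    ring
  rw [sum_G_eq, hrow]
  ring

/-- At the symmetric spike positions `x_j = −1 + (2j−1)/N`, the Green's function
row sums are constant: `Σ_j G(x_k, x_j) = −1/(6DN)`. -/
theorem stmt_9 (D : ℝ) (hD : 0 < D) (N : ℕ) (hN : 0 < N)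
    (x : Fin N → ℝ) (hx : ∀ j : Fin N, x j = -1 + (2 * (j : ℝ) + 1) / N) :
    ∀ k : Fin N, (∑ j : Fin N, G D (x k) (x j)) = -1 / (6 * D * N) :=
  stmt_9_general D N x hx
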